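/- Let $M \subseteq \mathbb{Z}^n$ be a positive normal affine monoid with $\mathrm{gp}(M) = \mathbb{Z}^n$ and support forms $\sigma_1, \dots, \sigma_s$. If $y \in M$ satisfies $\sigma_i(y) = 1$ for all $i$, then $\mathrm{relint}(M) = y + M$. -/

import Mathlib

open scoped BigOperators

noncomputable section

/-- The canonical map `ℤⁿ → ℝⁿ`. -/
def toR {n : ℕ} (z : Fin n → ℤ) : Fin n → ℝ := fun i => (z i : ℝ)

/-- The real extension of an integral linear form. -/
def realForm {n : ℕ} (ℓ : (Fin n → ℤ) →ₗ[ℤ] ℤ) (x : Fin n → ℝ) : ℝ :=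
  ∑ k, (ℓ (Pi.single k 1) : ℝ) * x k

/-- The cone in `ℝⁿ` generated by a set of lattice points. -/
def coneOf {n : ℕ} (M : Set (Fin n → ℤ)) : Set (Fin n → ℝ) :=
  {x | ∃ (t : Finset (Fin n → ℤ)) (c : (Fin n → ℤ) → ℝ),
    (↑t : Set (Fin n → ℤ)) ⊆ M ∧ (∀ a, 0 ≤ c a) ∧ x = ∑ a ∈ t, c a • toR a}

/-- `relint M` with respect to the support forms `σ`. -/
def relintM {n s : ℕ} (M : AddSubmonoid (Fin n → ℤ))
    (σ : Fin s → ((Fin n → ℤ) →ₗ[ℤ] ℤ)) : Set (Fin n → ℤ) :=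
  {a | a ∈ M ∧ ∀ i, 0 < σ i a}

/-
The support forms cut out the real cone of `M`, and normality makes `M` the set of all lattice
points of that cone: a lattice point `x` in the cone is, by Carathéodory, a nonnegative combination
of linearly independent elements of `M`, whose coefficients are then rational; clearing
denominators puts `N • x` in `M`, hence `x ∈ M`. So `a ∈ M` iff `σᵢ a ≥ 0` for all `i`, and since
`σᵢ y = 1` the conditions `σᵢ a > 0` for `a` and `σᵢ (a - y) ≥ 0` coincide.
-/

section Caratheodory

variable {𝕜 E ι : Type*} [Field 𝕜] [LinearOrder 𝕜] [IsStrictOrderedRing 𝕜]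
  [AddCommGroup E] [Module 𝕜 E] [DecidableEq ι] {v : ι → E} {t : Finset ι} {c : ι → 𝕜}

/-- Move along a linear relation `g` until the first coefficient `c j` reaches zero. -/
theorem exists_sum_erase_eq_of_not_linearIndepOn (h : ¬LinearIndepOn 𝕜 v t)
    (hc : ∀ i ∈ t, 0 ≤ c i) :
    ∃ j ∈ t, ∃ d : ι → 𝕜, (∀ i ∈ t.erase j, 0 ≤ d i) ∧
      ∑ i ∈ t.erase j, d i • v i = ∑ i ∈ t, c i • v i := by
  obtain ⟨g, hg, hpos⟩ : ∃ g : ι → 𝕜, ∑ i ∈ t, g i • v i = 0 ∧ ∃ i ∈ t, 0 < g i := by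
    obtain ⟨g, hg, i, hi, hgi⟩ := not_linearIndepOn_finset_iff.mp h
    rcases hgi.lt_or_gt with hneg | hpos
    · exact ⟨-g, by simp [hg], i, hi, by simpa using hneg⟩
    · exact ⟨g, hg, i, hi, hpos⟩
  obtain ⟨j, hj, hmin⟩ := Finset.exists_min_image (t.filter (0 < g ·)) (fun i => c i / g i)
    (by simpa [Finset.Nonempty] using hpos)
  rw [Finset.mem_filter] at hj
  set r := c j / g j
  have hr : 0 ≤ r := div_nonneg (hc j hj.1) hj.2.le
  refine ⟨j, hj.1, fun i => c i - r * g i, fun i hi => ?_, ?_⟩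
  · have hit := Finset.mem_of_mem_erase hi
    rcases le_or_gt (g i) 0 with hgi | hgi
    · nlinarith [hc i hit]
    · have := hmin i (Finset.mem_filter.mpr ⟨hit, hgi⟩)
      rw [le_div_iff₀ hgi] at this
      linarith
  · rw [Finset.sum_erase _ (by simp [r, div_mul_cancel₀ _ hj.2.ne'])]
    simp only [sub_smul, Finset.sum_sub_distrib, mul_smul, ← Finset.smul_sum, hg, smul_zero,
      sub_zero]

theorem exists_linearIndepOn_sum_eq (hc : ∀ i ∈ t, 0 ≤ c i) :
    ∃ u ⊆ t, LinearIndepOn 𝕜 v u ∧ ∃ d : ι → 𝕜, (∀ i ∈ u, 0 ≤ d i) ∧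
      ∑ i ∈ u, d i • v i = ∑ i ∈ t, c i • v i := by
  induction t using Finset.strongInduction generalizing c with
  | H t ih =>
    by_cases h : LinearIndepOn 𝕜 v t
    · exact ⟨t, subset_rfl, h, c, hc, rfl⟩
    obtain ⟨j, hj, d, hd, hsum⟩ := exists_sum_erase_eq_of_not_linearIndepOn h hc
    obtain ⟨u, hu, hli, e, he, hsum'⟩ := ih _ (Finset.erase_ssubset hj) hd
    exact ⟨u, hu.trans (Finset.erase_subset _ _), hli, e, he, hsum'.trans hsum⟩

end Caratheodory

theorem toR_injective {n : ℕ} : Function.Injective (toR (n := n)) :=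
  fun _ _ h => funext fun k => by simpa [toR] using congrFun h k

theorem toR_nsmul {n : ℕ} (m : ℕ) (z : Fin n → ℤ) : toR (m • z) = m • toR z := by
  funext k; simp [toR]

theorem toR_sum {n : ℕ} {ι : Type*} (u : Finset ι) (z : ι → Fin n → ℤ) :
    toR (∑ i ∈ u, z i) = ∑ i ∈ u, toR (z i) := by
  funext k; simp [toR]

theorem realForm_toR {n : ℕ} (ℓ : (Fin n → ℤ) →ₗ[ℤ] ℤ) (z : Fin n → ℤ) :
    realForm ℓ (toR z) = ℓ z := by
  have hsingle (k : Fin n) : (Pi.single k (z k) : Fin n → ℤ) = z k • Pi.single k 1 := by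
    rw [← Pi.single_smul', smul_eq_mul, mul_one]
  conv_rhs => rw [← Finset.univ_sum_single z]
  simp only [realForm, toR, map_sum, hsingle, map_zsmul, smul_eq_mul, Int.cast_sum, Int.cast_mul]
  exact Finset.sum_congr rfl fun k _ => mul_comm _ _

theorem toR_mem_coneOf {n : ℕ} {M : Set (Fin n → ℤ)} {a : Fin n → ℤ} (ha : a ∈ M) :
    toR a ∈ coneOf M :=
  ⟨{a}, 1, by simpa using ha, fun _ => zero_le_one, by simp⟩

/-- A `ℚ`-linear retraction `φ : ℝ → ℚ` fixes the integral data, so `φ ∘ c` is another real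
solution of the same system; linear independence forces it to be `c`. -/
theorem exists_rat_eq_of_linearIndepOn {n : ℕ} {ι : Type*} {v : ι → Fin n → ℤ} {u : Finset ι}
    (hv : LinearIndepOn ℝ (fun i => toR (v i)) u) {c : ι → ℝ} {x : Fin n → ℤ}
    (hx : toR x = ∑ i ∈ u, c i • toR (v i)) :
    ∃ q : ι → ℚ, ∀ i ∈ u, (q i : ℝ) = c i := by
  obtain ⟨φ, hφ⟩ := (Algebra.linearMap ℚ ℝ).exists_leftInverse_of_injective
    (LinearMap.ker_eq_bot.mpr (algebraMap ℚ ℝ).injective)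
  have hφ_intCast_mul (m : ℤ) (r : ℝ) : φ (r * m) = m * φ r := by
    rw [mul_comm, ← zsmul_eq_mul, map_zsmul, zsmul_eq_mul]
  have hφ_ratCast (q : ℚ) : φ q = q := LinearMap.congr_fun hφ q
  refine ⟨fun i => φ (c i), fun i hi => ?_⟩
  refine linearIndepOn_finset_iffₛ.mp hv (fun i => (φ (c i) : ℝ)) c ?_ i hi
  rw [← hx]
  funext k
  have hxk := congrFun hx k
  simp only [toR, Finset.sum_apply, Pi.smul_apply, smul_eq_mul] at hxk ⊢
  have hφk := congrArg φ hxk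
  rw [map_sum, ← Rat.cast_intCast, hφ_ratCast] at hφk
  simp only [hφ_intCast_mul] at hφk
  rw [← Rat.cast_intCast, hφk]
  push_cast
  exact Finset.sum_congr rfl fun j _ => mul_comm _ _

theorem exists_pos_nat_mul_eq_natCast {ι : Type*} (u : Finset ι) (q : ι → ℚ)
    (hq : ∀ i ∈ u, 0 ≤ q i) : ∃ N : ℕ, 0 < N ∧ ∀ i ∈ u, ∃ m : ℕ, (m : ℚ) = N * q i := by
  refine ⟨∏ i ∈ u, (q i).den, Finset.prod_pos fun i _ => (q i).den_pos, fun i hi => ?_⟩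
  obtain ⟨k, hk⟩ := Finset.dvd_prod_of_mem (fun i => (q i).den) hi
  lift (q i).num to ℕ using Rat.num_nonneg.mpr (hq i hi) with p hp
  refine ⟨k * p, ?_⟩
  rw [hk]
  push_cast
  rw [show (p : ℚ) = (q i).num from mod_cast hp, ← Rat.mul_den_eq_num]
  ring

theorem mem_of_toR_mem_coneOf {n : ℕ} {M : AddSubmonoid (Fin n → ℤ)}
    (hnorm : ∀ (x : Fin n → ℤ) (k : ℕ), 0 < k → (k : ℤ) • x ∈ M → x ∈ M) {x : Fin n → ℤ}
    (hx : toR x ∈ coneOf (M : Set (Fin n → ℤ))) : x ∈ M := by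
  classical
  obtain ⟨t, c, htM, hc, hxt⟩ := hx
  obtain ⟨u, hut, hli, d, hd, hdu⟩ :=
    exists_linearIndepOn_sum_eq (v := toR) (t := t) fun i _ => hc i
  obtain ⟨q, hq⟩ := exists_rat_eq_of_linearIndepOn (v := id) hli (hxt.trans hdu.symm)
  obtain ⟨N, hN, hm⟩ := exists_pos_nat_mul_eq_natCast u q fun i hi => by
    exact_mod_cast (hq i hi).symm ▸ hd i hi
  choose! m hm using hm
  have hNx : (N : ℤ) • x = ∑ a ∈ u, m a • a := by
    refine toR_injective ?_
    rw [natCast_zsmul, toR_nsmul, toR_sum, hxt, ← hdu, Finset.smul_sum]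
    refine Finset.sum_congr rfl fun a ha => ?_
    rw [toR_nsmul, ← Nat.cast_smul_eq_nsmul ℝ N, ← Nat.cast_smul_eq_nsmul ℝ (m a), smul_smul,
      ← hq a ha]
    congr 1
    exact_mod_cast (hm a ha).symm
  refine hnorm x N hN ?_
  rw [hNx]
  exact M.sum_mem fun a ha => M.nsmul_mem (htM (hut ha)) _

theorem mem_iff_forall_zero_le_form {n s : ℕ} {M : AddSubmonoid (Fin n → ℤ)}
    (hnorm : ∀ (x : Fin n → ℤ) (k : ℕ), 0 < k → (k : ℤ) • x ∈ M → x ∈ M)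
    {σ : Fin s → ((Fin n → ℤ) →ₗ[ℤ] ℤ)}
    (hcone : coneOf (M : Set (Fin n → ℤ)) = {x | ∀ i, 0 ≤ realForm (σ i) x}) (a : Fin n → ℤ) :
    a ∈ M ↔ ∀ i, 0 ≤ σ i a := by
  have hcone_a : toR a ∈ coneOf (M : Set (Fin n → ℤ)) ↔ ∀ i, 0 ≤ σ i a := by
    simp only [hcone, Set.mem_ofPred_eq, realForm_toR, Int.cast_nonneg_iff]
  exact ⟨fun ha => hcone_a.mp (toR_mem_coneOf ha),
    fun h => mem_of_toR_mem_coneOf hnorm (hcone_a.mpr h)⟩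

theorem relint_eq_add_of_forms_one_general
    (n s : ℕ) (M : AddSubmonoid (Fin n → ℤ))
    (hnorm : ∀ (x : Fin n → ℤ) (k : ℕ), 0 < k → (k : ℤ) • x ∈ M → x ∈ M)
    (σ : Fin s → ((Fin n → ℤ) →ₗ[ℤ] ℤ))
    (hcone : coneOf (M : Set (Fin n → ℤ)) = {x | ∀ i, 0 ≤ realForm (σ i) x})
    (y : Fin n → ℤ) (hy1 : ∀ i, σ i y = 1) :
    relintM M σ = (fun a => y + a) '' (M : Set (Fin n → ℤ)) := by
  rw [Set.image_add_left]
  ext a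
  simp only [relintM, Set.mem_ofPred_eq, Set.mem_preimage, SetLike.mem_coe,
    mem_iff_forall_zero_le_form hnorm hcone, map_add, map_neg, hy1, ← forall_and]
  exact forall_congr' fun i => by omega

/-- If `y ∈ M` satisfies `σᵢ y = 1` for all support forms, then
`relint M = y + M`. -/
theorem relint_eq_add_of_forms_one
    (n s : ℕ) (M : AddSubmonoid (Fin n → ℤ)) (hfg : M.FG)
    (hpos : ∀ a ∈ M, -a ∈ M → a = 0)
    (hnorm : ∀ (x : Fin n → ℤ) (k : ℕ), 0 < k → (k : ℤ) • x ∈ M → x ∈ M)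
    (hgp : AddSubgroup.closure (M : Set (Fin n → ℤ)) = ⊤)
    (σ : Fin s → ((Fin n → ℤ) →ₗ[ℤ] ℤ))
    (hcone : coneOf (M : Set (Fin n → ℤ)) = {x | ∀ i, 0 ≤ realForm (σ i) x})
    (hirr : ∀ i, ∃ x : Fin n → ℝ,
      (∀ j, j ≠ i → 0 ≤ realForm (σ j) x) ∧ realForm (σ i) x < 0)
    (hprim : ∀ i, Finset.univ.gcd (fun k => σ i (Pi.single k 1)) = 1)
    (y : Fin n → ℤ) (hy : y ∈ M) (hy1 : ∀ i, σ i y = 1) :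
    relintM M σ = (fun a => y + a) '' (M : Set (Fin n → ℤ)) :=
  relint_eq_add_of_forms_one_general n s M hnorm σ hcone y hy1

end
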